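/- arXiv:1508.03216 — 5 statements merged into one kernel-verified Lean document; each statement's English description precedes it below -/
import Mathlib

section
/- (Proposition 1, invariance, case m < N.) For every (G,f) ∈ 𝓛, every z ∈ ℂ^N, and every Hermitian positive definite S ∈ ℂ^{N×N}, the statistic t₁ is invariant under the group action: t₁(Gz + f, G S G†) = t₁(z, S). -/
open Matrix ComplexOrder

/-- The set 𝓖 of block upper-triangular matrices (partition sizes `t`, `r`, `q = N - m`)
with invertible diagonal blocks. -/
def memG (t r q : ℕ) (G : Matrix (Fin t ⊕ Fin r ⊕ Fin q) (Fin t ⊕ Fin r ⊕ Fin q) ℂ) : Prop :=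
  (∀ i j, G (Sum.inr i) (Sum.inl j) = 0) ∧
  (∀ i j, G (Sum.inr (Sum.inr i)) (Sum.inr (Sum.inl j)) = 0) ∧
  IsUnit (G.submatrix Sum.inl Sum.inl) ∧
  IsUnit (G.submatrix (Sum.inr ∘ Sum.inl) (Sum.inr ∘ Sum.inl)) ∧
  IsUnit (G.submatrix (Sum.inr ∘ Sum.inr) (Sum.inr ∘ Sum.inr))

/-- The set 𝓕 of vectors in ℂ^N whose last `N - t` entries are zero. -/
def memF (t r q : ℕ) (f : Fin t ⊕ Fin r ⊕ Fin q → ℂ) : Prop :=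
  ∀ i, f (Sum.inr i) = 0

/-- Second block (size `r`) of a partitioned vector. -/
def blk2 {t r q : ℕ} (z : Fin t ⊕ Fin r ⊕ Fin q → ℂ) : Fin r → ℂ :=
  fun i => z (Sum.inr (Sum.inl i))

/-- Third block (size `q = N - m`) of a partitioned vector. -/
def blk3 {t r q : ℕ} (z : Fin t ⊕ Fin r ⊕ Fin q → ℂ) : Fin q → ℂ :=
  fun i => z (Sum.inr (Sum.inr i))

/-- The `(2,2)` block `S₂₂` of a partitioned matrix. -/
def S22 {t r q : ℕ} (S : Matrix (Fin t ⊕ Fin r ⊕ Fin q) (Fin t ⊕ Fin r ⊕ Fin q) ℂ) :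
    Matrix (Fin r) (Fin r) ℂ :=
  S.submatrix (Sum.inr ∘ Sum.inl) (Sum.inr ∘ Sum.inl)

/-- The `(2,3)` block `S₂₃` of a partitioned matrix. -/
def S23 {t r q : ℕ} (S : Matrix (Fin t ⊕ Fin r ⊕ Fin q) (Fin t ⊕ Fin r ⊕ Fin q) ℂ) :
    Matrix (Fin r) (Fin q) ℂ :=
  S.submatrix (Sum.inr ∘ Sum.inl) (Sum.inr ∘ Sum.inr)

/-- The `(3,2)` block `S₃₂` of a partitioned matrix. -/
def S32 {t r q : ℕ} (S : Matrix (Fin t ⊕ Fin r ⊕ Fin q) (Fin t ⊕ Fin r ⊕ Fin q) ℂ) :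
    Matrix (Fin q) (Fin r) ℂ :=
  S.submatrix (Sum.inr ∘ Sum.inr) (Sum.inr ∘ Sum.inl)

/-- The `(3,3)` block `S₃₃` of a partitioned matrix. -/
def S33 {t r q : ℕ} (S : Matrix (Fin t ⊕ Fin r ⊕ Fin q) (Fin t ⊕ Fin r ⊕ Fin q) ℂ) :
    Matrix (Fin q) (Fin q) ℂ :=
  S.submatrix (Sum.inr ∘ Sum.inr) (Sum.inr ∘ Sum.inr)

/-- `z_{2.3} = z₂ - S₂₃ S₃₃⁻¹ z₃`. -/
noncomputable def zdot {t r q : ℕ} (z : Fin t ⊕ Fin r ⊕ Fin q → ℂ)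
    (S : Matrix (Fin t ⊕ Fin r ⊕ Fin q) (Fin t ⊕ Fin r ⊕ Fin q) ℂ) : Fin r → ℂ :=
  blk2 z - (S23 S * (S33 S)⁻¹) *ᵥ blk3 z

/-- `S_{2.3} = S₂₂ - S₂₃ S₃₃⁻¹ S₃₂`. -/
noncomputable def Sdot {t r q : ℕ}
    (S : Matrix (Fin t ⊕ Fin r ⊕ Fin q) (Fin t ⊕ Fin r ⊕ Fin q) ℂ) :
    Matrix (Fin r) (Fin r) ℂ :=
  S22 S - S23 S * (S33 S)⁻¹ * S32 S

/-- The maximal invariant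
`t₁(z,S) = (z_{2.3}† S_{2.3}⁻¹ z_{2.3}, z₃† S₃₃⁻¹ z₃)` for the case `m < N`. -/
noncomputable def t1 {t r q : ℕ} (z : Fin t ⊕ Fin r ⊕ Fin q → ℂ)
    (S : Matrix (Fin t ⊕ Fin r ⊕ Fin q) (Fin t ⊕ Fin r ⊕ Fin q) ℂ) : ℂ × ℂ :=
  (star (zdot z S) ⬝ᵥ ((Sdot S)⁻¹ *ᵥ zdot z S),
   star (blk3 z) ⬝ᵥ ((S33 S)⁻¹ *ᵥ blk3 z))

/-
The statistic `t₁` only sees the trailing `(r + q)`-block `(w, T)` of `(z, S)`. On it, a block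
upper-triangular `G` acts by the congruence `(w, T) ↦ (D w, D T Dᴴ)` with
`D = [[G₂₂, G₂₃], [0, G₃₃]]`, and `f` does not act at all. Under this congruence the regression
coefficient `K = T₁₂ T₂₂⁻¹` becomes `(G₂₂ K + G₂₃) G₃₃⁻¹`, hence the residual `w₁ - K w₂` is
multiplied by `G₂₂` and the Schur complement `T₁₁ - K T₂₁` becomes `G₂₂ (T₁₁ - K T₂₁) G₂₂ᴴ`,
while `T₂₂` becomes `G₃₃ T₂₂ G₃₃ᴴ`. Both components of `t₁` are forms `v† M⁻¹ v`, which are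
invariant under `(v, M) ↦ (A v, A M Aᴴ)` for invertible `A`.
-/

namespace Matrix

variable {m n K : Type*}

theorem eq_fromBlocks_of_toBlocks₂₁_eq_zero [Zero K] {D : Matrix (m ⊕ n) (m ⊕ n) K}
    (hD : D.toBlocks₂₁ = 0) :
    D = fromBlocks D.toBlocks₁₁ D.toBlocks₁₂ 0 D.toBlocks₂₂ := by
  rw [← hD, fromBlocks_toBlocks]

section BlockUpperTriangular

variable [Fintype m] [Fintype n] [Semiring K]

theorem fromBlocks_zero₂₁_mulVec_comp_inl (P : Matrix m m K) (Q : Matrix m n K)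
    (R : Matrix n n K) (w : m ⊕ n → K) :
    (fromBlocks P Q 0 R *ᵥ w) ∘ Sum.inl = P *ᵥ (w ∘ Sum.inl) + Q *ᵥ (w ∘ Sum.inr) := by
  rw [← Sum.elim_comp_inl_inr w, fromBlocks_mulVec]
  simp

theorem fromBlocks_zero₂₁_mulVec_comp_inr (P : Matrix m m K) (Q : Matrix m n K)
    (R : Matrix n n K) (w : m ⊕ n → K) :
    (fromBlocks P Q 0 R *ᵥ w) ∘ Sum.inr = R *ᵥ (w ∘ Sum.inr) := by
  rw [← Sum.elim_comp_inl_inr w, fromBlocks_mulVec]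
  simp

theorem fromBlocks_zero₂₁_mul_mul_conjTranspose [StarRing K] (P : Matrix m m K)
    (Q : Matrix m n K) (R : Matrix n n K) (A : Matrix m m K) (B : Matrix m n K)
    (C : Matrix n m K) (E : Matrix n n K) :
    fromBlocks P Q 0 R * fromBlocks A B C E * (fromBlocks P Q 0 R)ᴴ =
      fromBlocks ((P * A + Q * C) * Pᴴ + (P * B + Q * E) * Qᴴ) ((P * B + Q * E) * Rᴴ)
        (R * C * Pᴴ + R * E * Qᴴ) (R * E * Rᴴ) := by
  simp [fromBlocks_conjTranspose, fromBlocks_multiply, Matrix.mul_assoc]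

end BlockUpperTriangular

section Schur

variable [Fintype m] [Fintype n] [DecidableEq n] [CommRing K] [StarRing K]

noncomputable def invQuadForm (M : Matrix n n K) (v : n → K) : K :=
  star v ⬝ᵥ (M⁻¹ *ᵥ v)

theorem invQuadForm_conj {A : Matrix n n K} (hA : IsUnit A) (M : Matrix n n K) (v : n → K) :
    invQuadForm (A * M * Aᴴ) (A *ᵥ v) = invQuadForm M v := by
  have hA' : IsUnit A.det := (isUnit_iff_isUnit_det A).mp hA
  have hAH' : IsUnit Aᴴ.det := (isUnit_iff_isUnit_det _).mp ((isUnit_conjTranspose A).mpr hA)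
  -- `mul_inv_rev` holds for the junk inverse as well, so `M` need not be invertible.
  have hcancel : Aᴴ * ((A * M * Aᴴ)⁻¹ * A) = M⁻¹ := by
    rw [mul_inv_rev, mul_inv_rev, Matrix.mul_assoc, Matrix.mul_assoc, nonsing_inv_mul _ hA',
      Matrix.mul_one, mul_nonsing_inv_cancel_left _ _ hAH']
  rw [invQuadForm, invQuadForm, mulVec_mulVec, star_mulVec, dotProduct_mulVec, vecMul_vecMul,
    hcancel, ← dotProduct_mulVec]

noncomputable def regCoeff (T : Matrix (m ⊕ n) (m ⊕ n) K) : Matrix m n K :=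
  T.toBlocks₁₂ * T.toBlocks₂₂⁻¹

noncomputable def schurCompl (T : Matrix (m ⊕ n) (m ⊕ n) K) : Matrix m m K :=
  T.toBlocks₁₁ - regCoeff T * T.toBlocks₂₁

noncomputable def schurResid (w : m ⊕ n → K) (T : Matrix (m ⊕ n) (m ⊕ n) K) : m → K :=
  w ∘ Sum.inl - regCoeff T *ᵥ (w ∘ Sum.inr)

noncomputable def schurStat [DecidableEq m] (w : m ⊕ n → K) (T : Matrix (m ⊕ n) (m ⊕ n) K) :
    K × K :=
  (invQuadForm (schurCompl T) (schurResid w T), invQuadForm T.toBlocks₂₂ (w ∘ Sum.inr))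

variable {P : Matrix m m K} {Q : Matrix m n K} {R : Matrix n n K}
  {A : Matrix m m K} {B : Matrix m n K} {C : Matrix n m K} {E : Matrix n n K}

theorem regCoeff_conj (hR : IsUnit R) (hE : IsUnit E) :
    regCoeff (fromBlocks P Q 0 R * fromBlocks A B C E * (fromBlocks P Q 0 R)ᴴ) =
      (P * (B * E⁻¹) + Q) * R⁻¹ := by
  have : Invertible R := hR.invertible
  have : Invertible E := hE.invertible
  rw [regCoeff, fromBlocks_zero₂₁_mul_mul_conjTranspose, toBlocks_fromBlocks₁₂,
    toBlocks_fromBlocks₂₂, mul_inv_rev, mul_inv_rev]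
  simp only [← invOf_eq_nonsing_inv, Matrix.mul_assoc, Matrix.add_mul,
    Matrix.mul_invOf_cancel_left]

theorem schurResid_conj (hR : IsUnit R) (hE : IsUnit E) (w : m ⊕ n → K) :
    schurResid (fromBlocks P Q 0 R *ᵥ w)
        (fromBlocks P Q 0 R * fromBlocks A B C E * (fromBlocks P Q 0 R)ᴴ) =
      P *ᵥ schurResid w (fromBlocks A B C E) := by
  have hR' : IsUnit R.det := (isUnit_iff_isUnit_det R).mp hR
  have hK : regCoeff (fromBlocks A B C E) = B * E⁻¹ := by
    rw [regCoeff, toBlocks_fromBlocks₁₂, toBlocks_fromBlocks₂₂]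
  rw [schurResid, schurResid, regCoeff_conj hR hE, fromBlocks_zero₂₁_mulVec_comp_inl,
    fromBlocks_zero₂₁_mulVec_comp_inr, mulVec_mulVec, nonsing_inv_mul_cancel_right _ _ hR', hK,
    add_mulVec, mulVec_sub, ← mulVec_mulVec]
  abel

theorem schurCompl_conj (hR : IsUnit R) (hE : IsUnit E) :
    schurCompl (fromBlocks P Q 0 R * fromBlocks A B C E * (fromBlocks P Q 0 R)ᴴ) =
      P * schurCompl (fromBlocks A B C E) * Pᴴ := by
  have : Invertible R := hR.invertible
  have : Invertible E := hE.invertible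
  rw [schurCompl, schurCompl, regCoeff_conj hR hE, regCoeff, toBlocks_fromBlocks₁₂,
    toBlocks_fromBlocks₂₂, fromBlocks_zero₂₁_mul_mul_conjTranspose]
  simp only [toBlocks_fromBlocks₁₁, toBlocks_fromBlocks₂₁]
  simp only [← invOf_eq_nonsing_inv, Matrix.mul_assoc, Matrix.add_mul, Matrix.mul_add,
    Matrix.sub_mul, Matrix.mul_sub, Matrix.invOf_mul_cancel_left]
  abel

theorem schurStat_conj [DecidableEq m] (hP : IsUnit P) (hR : IsUnit R)
    (T : Matrix (m ⊕ n) (m ⊕ n) K) (hT : IsUnit T.toBlocks₂₂) (w : m ⊕ n → K) :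
    schurStat (fromBlocks P Q 0 R *ᵥ w) (fromBlocks P Q 0 R * T * (fromBlocks P Q 0 R)ᴴ) =
      schurStat w T := by
  obtain ⟨A, B, C, E, rfl⟩ : ∃ A B C E, T = fromBlocks A B C E :=
    ⟨_, _, _, _, (fromBlocks_toBlocks T).symm⟩
  rw [toBlocks_fromBlocks₂₂] at hT
  rw [schurStat, schurStat, schurResid_conj hR hT, schurCompl_conj hR hT, invQuadForm_conj hP,
    fromBlocks_zero₂₁_mulVec_comp_inr, fromBlocks_zero₂₁_mul_mul_conjTranspose,
    toBlocks_fromBlocks₂₂, invQuadForm_conj hR, toBlocks_fromBlocks₂₂]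

end Schur

end Matrix

theorem t1_eq_schurStat {t r q : ℕ} (z : Fin t ⊕ Fin r ⊕ Fin q → ℂ)
    (S : Matrix (Fin t ⊕ Fin r ⊕ Fin q) (Fin t ⊕ Fin r ⊕ Fin q) ℂ) :
    t1 z S = schurStat (z ∘ Sum.inr) S.toBlocks₂₂ :=
  rfl

theorem stmt2_general (t r q : ℕ)
    (G : Matrix (Fin t ⊕ Fin r ⊕ Fin q) (Fin t ⊕ Fin r ⊕ Fin q) ℂ)
    (f : Fin t ⊕ Fin r ⊕ Fin q → ℂ)
    (hG : memG t r q G) (hf : memF t r q f)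
    (z : Fin t ⊕ Fin r ⊕ Fin q → ℂ)
    (S : Matrix (Fin t ⊕ Fin r ⊕ Fin q) (Fin t ⊕ Fin r ⊕ Fin q) ℂ)
    (hS : S.PosDef) :
    t1 (G *ᵥ z + f) (G * S * Gᴴ) = t1 z S := by
  obtain ⟨hG₂₁, hG₃₂, -, hG₂₂, hG₃₃⟩ := hG
  have hG' := eq_fromBlocks_of_toBlocks₂₁_eq_zero (D := G) (by ext i j; exact hG₂₁ i j)
  have hD := eq_fromBlocks_of_toBlocks₂₁_eq_zero (D := G.toBlocks₂₂)
    (by ext i j; exact hG₃₂ i j)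
  have hS₃₃ : IsUnit S.toBlocks₂₂.toBlocks₂₂ :=
    (hS.submatrix (Sum.inr_injective.comp Sum.inr_injective)).isUnit
  have hz : (G *ᵥ z + f) ∘ Sum.inr = G.toBlocks₂₂ *ᵥ (z ∘ Sum.inr) := by
    have hf' : f ∘ Sum.inr = 0 := funext hf
    conv_lhs => rw [hG', Pi.add_comp, hf', add_zero, fromBlocks_zero₂₁_mulVec_comp_inr]
  have hS' : (G * S * Gᴴ).toBlocks₂₂ = G.toBlocks₂₂ * S.toBlocks₂₂ * G.toBlocks₂₂ᴴ := by
    conv_lhs => rw [hG', ← fromBlocks_toBlocks S, fromBlocks_zero₂₁_mul_mul_conjTranspose,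
      toBlocks_fromBlocks₂₂]
  rw [t1_eq_schurStat, t1_eq_schurStat, hz, hS', hD]
  exact schurStat_conj hG₂₂ hG₃₃ _ hS₃₃ _

/-- Proposition 1 (invariance, case `m < N`): for every `(G,f) ∈ 𝓛`, every `z` and every
Hermitian positive definite `S`, `t₁(Gz + f, G S Gᴴ) = t₁(z, S)`. -/
theorem stmt2 (t r q : ℕ) (ht : 1 ≤ t) (hr : 1 ≤ r) (hq : 1 ≤ q)
    (G : Matrix (Fin t ⊕ Fin r ⊕ Fin q) (Fin t ⊕ Fin r ⊕ Fin q) ℂ)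
    (f : Fin t ⊕ Fin r ⊕ Fin q → ℂ)
    (hG : memG t r q G) (hf : memF t r q f)
    (z : Fin t ⊕ Fin r ⊕ Fin q → ℂ)
    (S : Matrix (Fin t ⊕ Fin r ⊕ Fin q) (Fin t ⊕ Fin r ⊕ Fin q) ℂ)
    (hS : S.PosDef) :
    t1 (G *ᵥ z + f) (G * S * Gᴴ) = t1 z S :=
  stmt2_general t r q G f hG hf z S hS
end

section
/- (Proposition 1, maximality, case m < N.) If z, z̄ ∈ ℂ^N and S, S̄ ∈ ℂ^{N×N} are Hermitian positive definite and t₁(z,S) = t₁(z̄,S̄), then there exists (G,f) ∈ 𝓛 such that z = G z̄ + f and S = G S̄ G†. -/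
open Matrix ComplexOrder

/-!
Every positive definite `S` factors as `S = L Lᴴ` with `L ∈ 𝓖`, by a block Cholesky factorisation
whose diagonal blocks are square roots of successive Schur complements; its last two are `A₂`, `D`
with `A₂ A₂ᴴ = S_{2.3}` and `D Dᴴ = S₃₃`. Blocks 2 and 3 of `L⁻¹ z` are then `A₂⁻¹ z_{2.3}` and
`D⁻¹ z₃`, whose squared norms are the two entries of `t₁(z,S)`. So equal invariants for `(z,S)` and
`(z̄,S̄)` give unitaries `U₂`, `U₃` matching these blocks, and `G = L · diag(1, U₂, U₃) · L̄⁻¹`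
works, the first block of `z - G z̄` being absorbed by `f`.
-/

section LinearIsometry

variable {𝕜 E : Type*} [RCLike 𝕜] [NormedAddCommGroup E] [InnerProductSpace 𝕜 E]
  [FiniteDimensional 𝕜 E]

theorem exists_orthonormalBasis_apply_eq {ι : Type*} [Fintype ι]
    (hι : Module.finrank 𝕜 E = Fintype.card ι) {e : E} (he : ‖e‖ = 1) (i : ι) :
    ∃ b : OrthonormalBasis ι 𝕜 E, b i = e := by
  obtain ⟨b, hb⟩ := Orthonormal.exists_orthonormalBasis_extension_of_card_eq (𝕜 := 𝕜) hι
    (v := fun _ => e) (s := {i}) (by simp [he])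
  exact ⟨b, hb i rfl⟩

theorem exists_linearIsometryEquiv_apply_eq {x y : E} (h : ‖x‖ = ‖y‖) :
    ∃ T : E ≃ₗᵢ[𝕜] E, T x = y := by
  rcases eq_or_ne x 0 with rfl | hx
  · exact ⟨.refl 𝕜 E, by simpa [eq_comm] using h⟩
  have hy : y ≠ 0 := by rintro rfl; simp_all
  have hE : 0 < Module.finrank 𝕜 E := Module.finrank_pos_iff_exists_ne_zero.mpr ⟨x, hx⟩
  obtain ⟨b, hb⟩ := exists_orthonormalBasis_apply_eq (Fintype.card_fin _).symm
    (norm_smul_inv_norm (𝕜 := 𝕜) hx) ⟨0, hE⟩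
  obtain ⟨c, hc⟩ := exists_orthonormalBasis_apply_eq (Fintype.card_fin _).symm
    (norm_smul_inv_norm (𝕜 := 𝕜) hy) ⟨0, hE⟩
  have rescale : ∀ z : E, z ≠ 0 → z = (‖z‖ : 𝕜) • ((‖z‖ : 𝕜)⁻¹ • z) := fun z hz => by
    rw [smul_smul, mul_inv_cancel₀ (by simpa using hz), one_smul]
  refine ⟨b.equiv c (.refl _), ?_⟩
  rw [rescale x hx, map_smul, ← hb, OrthonormalBasis.equiv_apply_basis, Equiv.refl_apply, hc, h,
    ← rescale y hy]

end LinearIsometry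

namespace Matrix

section Unitary

variable {𝕜 n : Type*} [RCLike 𝕜] [Fintype n] [DecidableEq n]

theorem exists_mem_unitaryGroup_mulVec_eq {u v : n → 𝕜} (h : star u ⬝ᵥ u = star v ⬝ᵥ v) :
    ∃ U ∈ unitaryGroup n 𝕜, U *ᵥ u = v := by
  have hnorm : ‖WithLp.toLp 2 u‖ = ‖WithLp.toLp 2 v‖ := by
    have hsq : (‖WithLp.toLp 2 u‖ : 𝕜) ^ 2 = (‖WithLp.toLp 2 v‖ : 𝕜) ^ 2 := by
      rw [← inner_self_eq_norm_sq_to_K, ← inner_self_eq_norm_sq_to_K,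
        EuclideanSpace.inner_toLp_toLp, EuclideanSpace.inner_toLp_toLp, dotProduct_comm, h,
        dotProduct_comm]
    exact (sq_eq_sq₀ (norm_nonneg _) (norm_nonneg _)).mp (by exact_mod_cast hsq)
  obtain ⟨T, hT⟩ := exists_linearIsometryEquiv_apply_eq (𝕜 := 𝕜) hnorm
  let U : unitary (EuclideanSpace 𝕜 n →L[𝕜] EuclideanSpace 𝕜 n) :=
    Unitary.linearIsometryEquiv.symm T
  refine ⟨(toEuclideanCLM (n := n) (𝕜 := 𝕜)).symm U, Unitary.map_mem _ U.2, ?_⟩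
  rw [← ofLp_toEuclideanCLM, StarAlgEquiv.apply_symm_apply]
  exact congrArg WithLp.ofLp hT

end Unitary

section Blocks

variable {α 𝕜 m n : Type*}

theorem IsHermitian.toBlocks₂₁_eq [InvolutiveStar α] {S : Matrix (m ⊕ n) (m ⊕ n) α}
    (hS : S.IsHermitian) : S.toBlocks₂₁ = S.toBlocks₁₂ᴴ := by
  rw [← fromBlocks_toBlocks S, isHermitian_fromBlocks_iff] at hS
  exact hS.2.1.symm

variable [Fintype m] [Fintype n] [DecidableEq n]

theorem fromBlocks_mem_unitaryGroup [DecidableEq m] [CommRing α] [StarRing α] {A : Matrix m m α}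
    {D : Matrix n n α} (hA : A ∈ unitaryGroup m α) (hD : D ∈ unitaryGroup n α) :
    fromBlocks A 0 0 D ∈ unitaryGroup (m ⊕ n) α := by
  rw [mem_unitaryGroup_iff, star_eq_conjTranspose] at *
  simp [fromBlocks_conjTranspose, fromBlocks_multiply, hA, hD]

theorem mul_mul_inv_conj_eq_of_mem_unitaryGroup [CommRing α] [StarRing α]
    {L W L' : Matrix n n α} (hL' : IsUnit L') (hW : W ∈ unitaryGroup n α) :
    L * W * L'⁻¹ * (L' * L'ᴴ) * (L * W * L'⁻¹)ᴴ = L * Lᴴ := by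
  calc L * W * L'⁻¹ * (L' * L'ᴴ) * (L * W * L'⁻¹)ᴴ
        = L * W * L'⁻¹ * L' * (L * W * L'⁻¹ * L')ᴴ := by
          simp only [conjTranspose_mul, Matrix.mul_assoc]
    _ = L * W * (L * W)ᴴ := by
          rw [Matrix.mul_assoc _ L'⁻¹, nonsing_inv_mul _ ((isUnit_iff_isUnit_det _).mp hL'),
            Matrix.mul_one]
    _ = L * Lᴴ := by
          rw [conjTranspose_mul, Matrix.mul_assoc, ← Matrix.mul_assoc W, ← star_eq_conjTranspose,
            mem_unitaryGroup_iff.mp hW, Matrix.one_mul]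

theorem star_inv_mulVec_dotProduct_inv_mulVec [CommRing α] [StarRing α] (A : Matrix n n α)
    (x : n → α) : star (A⁻¹ *ᵥ x) ⬝ᵥ (A⁻¹ *ᵥ x) = star x ⬝ᵥ ((A * Aᴴ)⁻¹ *ᵥ x) := by
  rw [star_mulVec, ← dotProduct_mulVec, Matrix.mul_inv_rev, ← conjTranspose_nonsing_inv,
    mulVec_mulVec]

theorem inv_fromBlocks_zero₂₁_mulVec [DecidableEq m] [CommRing α] {A : Matrix m m α}
    {B : Matrix m n α} {D : Matrix n n α} (hA : IsUnit A) (hD : IsUnit D) (z : m ⊕ n → α) :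
    (fromBlocks A B 0 D)⁻¹ *ᵥ z =
      Sum.elim (A⁻¹ *ᵥ (z ∘ Sum.inl - (B * D⁻¹) *ᵥ (z ∘ Sum.inr))) (D⁻¹ *ᵥ (z ∘ Sum.inr)) := by
  rw [inv_fromBlocks_zero₂₁_of_isUnit_iff _ _ _ (iff_of_true hA hD), fromBlocks_mulVec]
  simp [mulVec_add, mulVec_neg, neg_mulVec, mulVec_mulVec, Matrix.mul_assoc, sub_eq_add_neg]

theorem fromBlocks_mul_conjTranspose_eq [CommRing α] [StarRing α]
    {S : Matrix (m ⊕ n) (m ⊕ n) α} (hS : S.IsHermitian) {A : Matrix m m α} {D : Matrix n n α}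
    (hA : A * Aᴴ = S.toBlocks₁₁ - S.toBlocks₁₂ * S.toBlocks₂₂⁻¹ * S.toBlocks₂₁)
    (hD : IsUnit D) (hDS : D * Dᴴ = S.toBlocks₂₂) :
    fromBlocks A (S.toBlocks₁₂ * Dᴴ⁻¹) 0 D * (fromBlocks A (S.toBlocks₁₂ * Dᴴ⁻¹) 0 D)ᴴ = S := by
  have hDH : IsUnit Dᴴ := by simpa using hD.star
  have hinv : Dᴴ⁻¹ * D⁻¹ = S.toBlocks₂₂⁻¹ := by rw [← Matrix.mul_inv_rev, hDS]
  have hBH : (S.toBlocks₁₂ * Dᴴ⁻¹)ᴴ = D⁻¹ * S.toBlocks₂₁ := by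
    rw [conjTranspose_mul, conjTranspose_nonsing_inv, conjTranspose_conjTranspose,
      hS.toBlocks₂₁_eq]
  conv_rhs => rw [← fromBlocks_toBlocks S]
  rw [fromBlocks_conjTranspose, fromBlocks_multiply]
  congr 1
  · rw [hBH, Matrix.mul_assoc, ← Matrix.mul_assoc Dᴴ⁻¹, hinv, hA, ← Matrix.mul_assoc,
      sub_add_cancel]
  · simp [Matrix.mul_assoc, nonsing_inv_mul _ ((isUnit_iff_isUnit_det _).mp hDH)]
  · simp [hBH, mul_nonsing_inv_cancel_left _ _ ((isUnit_iff_isUnit_det _).mp hD)]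
  · simpa using hDS

theorem PosDef.schur [DecidableEq m] [RCLike 𝕜] {S : Matrix (m ⊕ n) (m ⊕ n) 𝕜}
    (hS : S.PosDef) :
    (S.toBlocks₁₁ - S.toBlocks₁₂ * S.toBlocks₂₂⁻¹ * S.toBlocks₂₁).PosDef := by
  have hD : S.toBlocks₂₂.PosDef := hS.submatrix Sum.inr_injective
  let := hD.isUnit.invertible
  have hS₂₁ := hS.isHermitian.toBlocks₂₁_eq
  have hSblk := hS
  rw [← fromBlocks_toBlocks S, hS₂₁] at hSblk
  have hsemi := (PosDef.fromBlocks₂₂ _ _ hD).mp hSblk.posSemidef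
  rw [hS₂₁]
  refine hsemi.posDef_iff_det_ne_zero.mpr fun h0 => hSblk.det_pos.ne' ?_
  rw [det_fromBlocks₂₂, invOf_eq_nonsing_inv, h0, mul_zero]

open scoped Matrix.Norms.L2Operator MatrixOrder in
theorem PosDef.exists_isUnit_mul_conjTranspose_eq {M : Matrix n n ℂ} (hM : M.PosDef) :
    ∃ C : Matrix n n ℂ, IsUnit C ∧ C * Cᴴ = M := by
  obtain ⟨C, hC, rfl⟩ :=
    CStarAlgebra.isStrictlyPositive_iff_eq_mul_star_self.mp hM.isStrictlyPositive
  exact ⟨C, hC, rfl⟩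

end Blocks

end Matrix

section BlockTriangular

variable {t r q : ℕ}

theorem memG_iff {G : Matrix (Fin t ⊕ Fin r ⊕ Fin q) (Fin t ⊕ Fin r ⊕ Fin q) ℂ} :
    memG t r q G ↔ ∃ (A : Matrix (Fin t) (Fin t) ℂ) (B : Matrix (Fin t) (Fin r ⊕ Fin q) ℂ)
      (A₂ : Matrix (Fin r) (Fin r) ℂ) (B₂ : Matrix (Fin r) (Fin q) ℂ)
      (D : Matrix (Fin q) (Fin q) ℂ),
      IsUnit A ∧ IsUnit A₂ ∧ IsUnit D ∧ G = fromBlocks A B 0 (fromBlocks A₂ B₂ 0 D) := by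
  constructor
  · rintro ⟨h₂₁, h₃₂, hA, hA₂, hD⟩
    refine ⟨_, G.toBlocks₁₂, _, G.toBlocks₂₂.toBlocks₁₂, _, hA, hA₂, hD, ?_⟩
    ext (i | i | i) (j | j | j) <;> simp [h₂₁, h₃₂, toBlocks₁₂, toBlocks₂₂]
  · rintro ⟨A, B, A₂, B₂, D, hA, hA₂, hD, rfl⟩
    exact ⟨fun _ _ => rfl, fun _ _ => rfl, hA, hA₂, hD⟩

theorem memG.isUnit {G : Matrix (Fin t ⊕ Fin r ⊕ Fin q) (Fin t ⊕ Fin r ⊕ Fin q) ℂ}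
    (hG : memG t r q G) : IsUnit G := by
  obtain ⟨A, B, A₂, B₂, D, hA, hA₂, hD, rfl⟩ := memG_iff.mp hG
  exact isUnit_fromBlocks_zero₂₁.mpr ⟨hA, isUnit_fromBlocks_zero₂₁.mpr ⟨hA₂, hD⟩⟩

theorem memG_mul {G H : Matrix (Fin t ⊕ Fin r ⊕ Fin q) (Fin t ⊕ Fin r ⊕ Fin q) ℂ}
    (hG : memG t r q G) (hH : memG t r q H) : memG t r q (G * H) := by
  obtain ⟨A, B, A₂, B₂, D, hA, hA₂, hD, rfl⟩ := memG_iff.mp hG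
  obtain ⟨A', B', A₂', B₂', D', hA', hA₂', hD', rfl⟩ := memG_iff.mp hH
  simp only [fromBlocks_multiply, Matrix.mul_zero, Matrix.zero_mul, add_zero, zero_add]
  exact memG_iff.mpr ⟨_, _, _, _, _, hA.mul hA', hA₂.mul hA₂', hD.mul hD', rfl⟩

theorem memG_nonsing_inv {G : Matrix (Fin t ⊕ Fin r ⊕ Fin q) (Fin t ⊕ Fin r ⊕ Fin q) ℂ}
    (hG : memG t r q G) : memG t r q G⁻¹ := by
  obtain ⟨A, B, A₂, B₂, D, hA, hA₂, hD, rfl⟩ := memG_iff.mp hG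
  have hA₂D : IsUnit (fromBlocks A₂ B₂ 0 D) := isUnit_fromBlocks_zero₂₁.mpr ⟨hA₂, hD⟩
  rw [inv_fromBlocks_zero₂₁_of_isUnit_iff _ _ _ (iff_of_true hA hA₂D),
    inv_fromBlocks_zero₂₁_of_isUnit_iff _ _ _ (iff_of_true hA₂ hD)]
  exact memG_iff.mpr ⟨_, _, _, _, _, isUnit_nonsing_inv_iff.mpr hA,
    isUnit_nonsing_inv_iff.mpr hA₂, isUnit_nonsing_inv_iff.mpr hD, rfl⟩

theorem memF_mulVec {G : Matrix (Fin t ⊕ Fin r ⊕ Fin q) (Fin t ⊕ Fin r ⊕ Fin q) ℂ}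
    {f : Fin t ⊕ Fin r ⊕ Fin q → ℂ} (hG : memG t r q G) (hf : memF t r q f) :
    memF t r q (G *ᵥ f) := by
  intro i
  simp [mulVec, dotProduct, Fintype.sum_sum_type, hG.1, hf _]

theorem memF_sub_fromBlocks_mulVec {x y : Fin t ⊕ Fin r ⊕ Fin q → ℂ}
    {U₂ : Matrix (Fin r) (Fin r) ℂ} {U₃ : Matrix (Fin q) (Fin q) ℂ}
    (h₂ : U₂ *ᵥ blk2 y = blk2 x) (h₃ : U₃ *ᵥ blk3 y = blk3 x) :
    memF t r q (x - fromBlocks 1 0 0 (fromBlocks U₂ 0 0 U₃) *ᵥ y) := by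
  rintro (i | i) <;>
    simp only [fromBlocks_mulVec, one_mulVec, zero_mulVec, add_zero, zero_add, Pi.sub_apply,
      Sum.elim_inl, Sum.elim_inr, sub_eq_zero]
  exacts [(congrFun h₂ i).symm, (congrFun h₃ i).symm]

theorem exists_memG_mul_conjTranspose_eq
    {S : Matrix (Fin t ⊕ Fin r ⊕ Fin q) (Fin t ⊕ Fin r ⊕ Fin q) ℂ} (hS : S.PosDef)
    (z : Fin t ⊕ Fin r ⊕ Fin q → ℂ) :
    ∃ L, memG t r q L ∧ L * Lᴴ = S ∧
      star (blk2 (L⁻¹ *ᵥ z)) ⬝ᵥ blk2 (L⁻¹ *ᵥ z) = (t1 z S).1 ∧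
      star (blk3 (L⁻¹ *ᵥ z)) ⬝ᵥ blk3 (L⁻¹ *ᵥ z) = (t1 z S).2 := by
  have hS' : S.toBlocks₂₂.PosDef := hS.submatrix Sum.inr_injective
  obtain ⟨D, hD, hDS⟩ := (hS'.submatrix Sum.inr_injective).exists_isUnit_mul_conjTranspose_eq
  obtain ⟨A₂, hA₂, hA₂S⟩ := hS'.schur.exists_isUnit_mul_conjTranspose_eq
  obtain ⟨A, hA, hAS⟩ := hS.schur.exists_isUnit_mul_conjTranspose_eq
  set L₂ := fromBlocks A₂ (S.toBlocks₂₂.toBlocks₁₂ * Dᴴ⁻¹) 0 D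
  have hL₂ : IsUnit L₂ := isUnit_fromBlocks_zero₂₁.mpr ⟨hA₂, hD⟩
  have hL₂S : L₂ * L₂ᴴ = S.toBlocks₂₂ := fromBlocks_mul_conjTranspose_eq hS'.isHermitian hA₂S hD hDS
  have hDD : S.toBlocks₂₂.toBlocks₁₂ * Dᴴ⁻¹ * D⁻¹ = S23 S * (S33 S)⁻¹ := by
    rw [Matrix.mul_assoc, ← Matrix.mul_inv_rev, hDS]
    rfl
  set L := fromBlocks A (S.toBlocks₁₂ * L₂ᴴ⁻¹) 0 L₂
  have hz : (L⁻¹ *ᵥ z) ∘ Sum.inr = Sum.elim (A₂⁻¹ *ᵥ zdot z S) (D⁻¹ *ᵥ blk3 z) := by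
    rw [inv_fromBlocks_zero₂₁_mulVec hA hL₂, Sum.elim_comp_inr,
      inv_fromBlocks_zero₂₁_mulVec hA₂ hD, hDD]
    rfl
  refine ⟨L, memG_iff.mpr ⟨_, _, _, _, _, hA, hA₂, hD, rfl⟩,
    fromBlocks_mul_conjTranspose_eq hS.isHermitian hAS hL₂ hL₂S, ?_, ?_⟩
  · rw [show blk2 (L⁻¹ *ᵥ z) = A₂⁻¹ *ᵥ zdot z S from congrArg (· ∘ Sum.inl) hz,
      star_inv_mulVec_dotProduct_inv_mulVec, hA₂S]
    rfl
  · rw [show blk3 (L⁻¹ *ᵥ z) = D⁻¹ *ᵥ blk3 z from congrArg (· ∘ Sum.inr) hz,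
      star_inv_mulVec_dotProduct_inv_mulVec, hDS]
    rfl

end BlockTriangular

theorem stmt3_general (t r q : ℕ)
    (z zb : Fin t ⊕ Fin r ⊕ Fin q → ℂ)
    (S Sb : Matrix (Fin t ⊕ Fin r ⊕ Fin q) (Fin t ⊕ Fin r ⊕ Fin q) ℂ)
    (hS : S.PosDef) (hSb : Sb.PosDef)
    (heq : t1 z S = t1 zb Sb) :
    ∃ G : Matrix (Fin t ⊕ Fin r ⊕ Fin q) (Fin t ⊕ Fin r ⊕ Fin q) ℂ,
      ∃ f : Fin t ⊕ Fin r ⊕ Fin q → ℂ,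
        memG t r q G ∧ memF t r q f ∧ z = G *ᵥ zb + f ∧ S = G * Sb * Gᴴ := by
  obtain ⟨L, hL, hLS, hz₂, hz₃⟩ := exists_memG_mul_conjTranspose_eq hS z
  obtain ⟨Lb, hLb, hLbS, hzb₂, hzb₃⟩ := exists_memG_mul_conjTranspose_eq hSb zb
  obtain ⟨U₂, hU₂, hU₂z⟩ := exists_mem_unitaryGroup_mulVec_eq (u := blk2 (Lb⁻¹ *ᵥ zb))
    (v := blk2 (L⁻¹ *ᵥ z)) (by rw [hz₂, hzb₂, heq])
  obtain ⟨U₃, hU₃, hU₃z⟩ := exists_mem_unitaryGroup_mulVec_eq (u := blk3 (Lb⁻¹ *ᵥ zb))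
    (v := blk3 (L⁻¹ *ᵥ z)) (by rw [hz₃, hzb₃, heq])
  set W := fromBlocks (1 : Matrix (Fin t) (Fin t) ℂ) 0 0 (fromBlocks U₂ 0 0 U₃)
  have hW : W ∈ unitaryGroup _ ℂ :=
    fromBlocks_mem_unitaryGroup (one_mem _) (fromBlocks_mem_unitaryGroup hU₂ hU₃)
  have hWG : memG t r q W := memG_iff.mpr ⟨_, _, _, _, _, isUnit_one,
    Unitary.isUnit_coe (U := ⟨U₂, hU₂⟩), Unitary.isUnit_coe (U := ⟨U₃, hU₃⟩), rfl⟩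
  refine ⟨L * W * Lb⁻¹, z - (L * W * Lb⁻¹) *ᵥ zb,
    memG_mul (memG_mul hL hWG) (memG_nonsing_inv hLb), ?_, (add_sub_cancel _ _).symm,
    by rw [← hLbS, mul_mul_inv_conj_eq_of_mem_unitaryGroup hLb.isUnit hW, hLS]⟩
  have hf : z - (L * W * Lb⁻¹) *ᵥ zb = L *ᵥ (L⁻¹ *ᵥ z - W *ᵥ (Lb⁻¹ *ᵥ zb)) := by
    rw [mulVec_sub, mulVec_mulVec, mulVec_mulVec, mulVec_mulVec,
      mul_nonsing_inv _ ((isUnit_iff_isUnit_det _).mp hL.isUnit), one_mulVec]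
  rw [hf]
  exact memF_mulVec hL (memF_sub_fromBlocks_mulVec hU₂z hU₃z)

/-- Proposition 1 (maximality, case `m < N`): if `t₁(z,S) = t₁(z̄,S̄)` for Hermitian
positive definite `S`, `S̄`, then there is `(G,f) ∈ 𝓛` with `z = G z̄ + f` and
`S = G S̄ Gᴴ`. -/
theorem stmt3 (t r q : ℕ) (ht : 1 ≤ t) (hr : 1 ≤ r) (hq : 1 ≤ q)
    (z zb : Fin t ⊕ Fin r ⊕ Fin q → ℂ)
    (S Sb : Matrix (Fin t ⊕ Fin r ⊕ Fin q) (Fin t ⊕ Fin r ⊕ Fin q) ℂ)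
    (hS : S.PosDef) (hSb : Sb.PosDef)
    (heq : t1 z S = t1 zb Sb) :
    ∃ G : Matrix (Fin t ⊕ Fin r ⊕ Fin q) (Fin t ⊕ Fin r ⊕ Fin q) ℂ,
      ∃ f : Fin t ⊕ Fin r ⊕ Fin q → ℂ,
        memG t r q G ∧ memF t r q f ∧ z = G *ᵥ zb + f ∧ S = G * Sb * Gᴴ :=
  stmt3_general t r q z zb S Sb hS hSb heq
end

section
/- (Projection quadratic-form identity, eq. (33).) Let N ≥ 2 and 1 ≤ t < N be integers, let S ∈ ℂ^{N×N} be Hermitian positive definite with Hermitian positive definite inverse square root S^{−1/2}, and let E_t ∈ ℂ^{N×t} consist of the first t standard basis vectors of ℂ^N. Set A := S^{−1/2}E_t and P_A := A(A†A)⁻¹A†. Then for every z ∈ ℂ^N, z† S^{−1/2} (I_N − P_A) S^{−1/2} z = z_b† S_b⁻¹ z_b, where z_b ∈ ℂ^{N−t} is the vector of the last N−t entries of z and S_b ∈ ℂ^{(N−t)×(N−t)} is the trailing (N−t)×(N−t) principal submatrix of S. -/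
open Matrix ComplexOrder

/-- `E_t`: the matrix whose columns are the first `t` standard basis vectors of ℂ^N,
`N = t + p`. -/
def Et (t p : ℕ) : Matrix (Fin t ⊕ Fin p) (Fin t) ℂ :=
  Matrix.of fun i j => if i = Sum.inl j then 1 else 0

/-- The orthogonal projection `P_A = A (A† A)⁻¹ A†` onto the column space of `A`. -/
noncomputable def proj {n : Type*} {k : Type*} [Fintype n] [Fintype k] [DecidableEq n]
    [DecidableEq k] (A : Matrix n k ℂ) : Matrix n n ℂ :=
  A * (Aᴴ * A)⁻¹ * Aᴴ

/-! Since `R` is Hermitian with `R * R = S⁻¹ =: M`, conjugating `1 - P_A` by `R` gives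
`M - M E (Eᴴ M E)⁻¹ Eᴴ M`. In block form `Eᴴ M E = M₁₁`, `M E = [M₁₁; M₂₁]` and
`Eᴴ M = [M₁₁ M₁₂]`, so this matrix vanishes outside the trailing block, where it is the
Schur complement `M₂₂ - M₂₁ M₁₁⁻¹ M₁₂`. Reading off the trailing block of `M * S = 1` shows
that this Schur complement of `S⁻¹` is the inverse of the trailing block `S_b` of `S`. -/

namespace Matrix

variable {m n α : Type*} [Fintype m] [DecidableEq m] [CommRing α]

theorem fromBlocks_sub_fromRows_mul_inv_mul_fromCols (A : Matrix m m α) (B : Matrix m n α)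
    (C : Matrix n m α) (D : Matrix n n α) (hA : IsUnit A.det) :
    fromBlocks A B C D - fromRows A C * A⁻¹ * fromCols A B =
      fromBlocks 0 0 0 (D - C * A⁻¹ * B) := by
  rw [fromRows_mul, fromRows_mul_fromCols, mul_nonsing_inv _ hA, Matrix.one_mul,
    nonsing_inv_mul_cancel_right _ _ hA]
  ext (i | i) (j | j) <;> simp

theorem inv_toBlocks₂₂_eq_of_mul_eq_one [Fintype n] [DecidableEq n]
    {M S : Matrix (m ⊕ n) (m ⊕ n) α} (hMS : M * S = 1) (hM₁₁ : IsUnit M.toBlocks₁₁.det) :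
    S.toBlocks₂₂⁻¹ = M.toBlocks₂₂ - M.toBlocks₂₁ * M.toBlocks₁₁⁻¹ * M.toBlocks₁₂ := by
  rw [← fromBlocks_toBlocks M, ← fromBlocks_toBlocks S, fromBlocks_multiply,
    ← fromBlocks_one] at hMS
  obtain ⟨-, h₁₂, -, h₂₂⟩ := fromBlocks_inj.mp hMS
  refine inv_eq_left_inv ?_
  calc _ = M.toBlocks₂₂ * S.toBlocks₂₂ -
        M.toBlocks₂₁ * (M.toBlocks₁₁⁻¹ * (M.toBlocks₁₂ * S.toBlocks₂₂)) := by
        simp only [Matrix.sub_mul, Matrix.mul_assoc]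
    _ = M.toBlocks₂₁ * S.toBlocks₁₂ + M.toBlocks₂₂ * S.toBlocks₂₂ := by
        rw [eq_neg_of_add_eq_zero_right h₁₂, Matrix.mul_neg, nonsing_inv_mul_cancel_left _ _ hM₁₁,
          Matrix.mul_neg, sub_neg_eq_add, add_comm]
    _ = 1 := h₂₂

omit [DecidableEq m] in
theorem dotProduct_fromBlocks_zero_mulVec [Fintype n] (D : Matrix n n α) (w z : m ⊕ n → α) :
    w ⬝ᵥ (fromBlocks 0 0 0 D *ᵥ z) =
      (fun i => w (Sum.inr i)) ⬝ᵥ (D *ᵥ fun i => z (Sum.inr i)) := by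
  simp [dotProduct, fromBlocks_mulVec, Fintype.sum_sum_type, Function.comp_def]

theorem IsHermitian.mul_one_sub_proj_mul_self [Fintype n] [DecidableEq n] {R : Matrix n n ℂ}
    (hR : R.IsHermitian) (B : Matrix n m ℂ) :
    R * (1 - proj (R * B)) * R = R * R - R * R * B * (Bᴴ * (R * R) * B)⁻¹ * (Bᴴ * (R * R)) := by
  simp only [proj, conjTranspose_mul, hR.eq, Matrix.mul_sub, Matrix.sub_mul, Matrix.mul_one,
    Matrix.mul_assoc]

end Matrix

section Et

variable {t p : ℕ}

theorem mul_Et (M : Matrix (Fin t ⊕ Fin p) (Fin t ⊕ Fin p) ℂ) :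
    M * Et t p = fromRows M.toBlocks₁₁ M.toBlocks₂₁ := by
  ext (i | i) j <;> simp [mul_apply, Et, toBlocks₁₁, toBlocks₂₁]

theorem conjTranspose_Et_mul (M : Matrix (Fin t ⊕ Fin p) (Fin t ⊕ Fin p) ℂ) :
    (Et t p)ᴴ * M = fromCols M.toBlocks₁₁ M.toBlocks₁₂ := by
  ext i (j | j) <;> simp [mul_apply, Et, toBlocks₁₁, toBlocks₁₂, conjTranspose_apply, apply_ite]

theorem conjTranspose_Et_mul_mul_Et (M : Matrix (Fin t ⊕ Fin p) (Fin t ⊕ Fin p) ℂ) :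
    (Et t p)ᴴ * M * Et t p = M.toBlocks₁₁ := by
  rw [conjTranspose_Et_mul]
  ext i j
  simp [mul_apply, Et]

end Et

theorem stmt7_general (t p : ℕ)
    (S : Matrix (Fin t ⊕ Fin p) (Fin t ⊕ Fin p) ℂ) (hS : S.PosDef)
    (R : Matrix (Fin t ⊕ Fin p) (Fin t ⊕ Fin p) ℂ) (hR : R.PosDef) (hRS : R * R = S⁻¹)
    (z : Fin t ⊕ Fin p → ℂ) :
    star z ⬝ᵥ ((R * (1 - proj (R * Et t p)) * R) *ᵥ z) =
      star (fun i => z (Sum.inr i)) ⬝ᵥ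
        ((S.submatrix Sum.inr Sum.inr)⁻¹ *ᵥ fun i => z (Sum.inr i)) := by
  have hS₁₁ : IsUnit S⁻¹.toBlocks₁₁.det :=
    (hS.inv.submatrix Sum.inl_injective).det_pos.ne'.isUnit
  have hSS : S⁻¹ * S = 1 := nonsing_inv_mul S (isUnit_iff_isUnit_det S |>.mp hS.isUnit)
  rw [hR.isHermitian.mul_one_sub_proj_mul_self, hRS, conjTranspose_Et_mul_mul_Et, mul_Et,
    conjTranspose_Et_mul]
  nth_rewrite 1 [← fromBlocks_toBlocks S⁻¹]
  rw [fromBlocks_sub_fromRows_mul_inv_mul_fromCols _ _ _ _ hS₁₁,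
    dotProduct_fromBlocks_zero_mulVec, ← inv_toBlocks₂₂_eq_of_mul_eq_one hSS hS₁₁]
  rfl

/-- Projection quadratic-form identity (eq. (33)): with `A = S^{-1/2} E_t`,
`z† S^{-1/2} (I − P_A) S^{-1/2} z = z_b† S_b⁻¹ z_b`, where `z_b` consists of the last
`N − t` entries of `z` and `S_b` is the trailing principal submatrix of `S`.
Here `R` denotes the Hermitian positive definite inverse square root `S^{-1/2}`,
i.e. `R` is positive definite with `R * R = S⁻¹`. -/
theorem stmt7 (t p : ℕ) (ht : 1 ≤ t) (hp : 1 ≤ p)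
    (S : Matrix (Fin t ⊕ Fin p) (Fin t ⊕ Fin p) ℂ) (hS : S.PosDef)
    (R : Matrix (Fin t ⊕ Fin p) (Fin t ⊕ Fin p) ℂ) (hR : R.PosDef) (hRS : R * R = S⁻¹)
    (z : Fin t ⊕ Fin p → ℂ) :
    star z ⬝ᵥ ((R * (1 - proj (R * Et t p)) * R) *ᵥ z) =
      star (fun i => z (Sum.inr i)) ⬝ᵥ
        ((S.submatrix Sum.inr Sum.inr)⁻¹ *ᵥ fun i => z (Sum.inr i)) :=
  stmt7_general t p S hS R hR hRS z
end

section
/- (Corollary: the LMPID for m = N.) Let M ≥ 0 and r ≥ 1 be integers (in the paper M = K−r+1) and let x ∈ ℝ. Define g : ℝ → ℝ by g(s) := e^{−s x} · Σ_{k=0}^{M} C(M,k) · ((r−1)!/(r+k−1)!) · (s(1−x))^k. Then g is differentiable at 0 and g′(0) = (M/r) · (1−x) − x. -/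
/-! By the product rule, g′(0) = −x · P(0) + P′(0) for the polynomial factor P. At `s = 0`
only the `k = 0` term of P survives, and it equals 1; only the `k = 1` term contributes to
P′(0), and its coefficient is `M · (r−1)!/r! = M/r`. -/

open Finset

theorem hasDerivAt_sum_mul_pow_zero (s : Finset ℕ) (c : ℕ → ℝ) (a : ℝ) :
    HasDerivAt (fun t : ℝ => ∑ k ∈ s, c k * (t * a) ^ k) (if 1 ∈ s then c 1 * a else 0) 0 := by
  have hterm (k : ℕ) : HasDerivAt (fun t : ℝ => c k * (t * a) ^ k)
      (if k = 1 then c 1 * a else 0) 0 := by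
    refine ((((hasDerivAt_id (0 : ℝ)).mul_const a).pow k).const_mul (c k)).congr_deriv ?_
    rcases k with _ | _ | k <;> simp
  simpa [Finset.sum_ite_eq'] using HasDerivAt.fun_sum fun k _ => hterm k

theorem factorial_pred_div_factorial {r : ℕ} (hr : r ≠ 0) :
    ((r - 1).factorial : ℝ) / r.factorial = 1 / r := by
  rw [← Nat.mul_factorial_pred hr, Nat.cast_mul]
  have : ((r - 1).factorial : ℝ) ≠ 0 := by positivity
  field_simp

/-- Corollary (the LMPID for `m = N`): the likelihood ratio
`g(s) = e^{−sx} Σ_{k=0}^{M} C(M,k) ((r−1)!/(r+k−1)!) (s(1−x))^k`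
is differentiable at `s = 0` with derivative `(M/r)(1−x) − x`. -/
theorem stmt12 (M r : ℕ) (hr : 1 ≤ r) (x : ℝ) :
    HasDerivAt (fun s : ℝ => Real.exp (-(s * x)) *
      ∑ k ∈ Finset.range (M + 1), (M.choose k : ℝ) *
        ((Nat.factorial (r - 1) : ℝ) / (Nat.factorial (r + k - 1))) *
          (s * (1 - x)) ^ k)
      ((M : ℝ) / r * (1 - x) - x) 0 := by
  have hexp : HasDerivAt (fun s : ℝ => Real.exp (-(s * x))) (-x) 0 := by
    simpa using ((hasDerivAt_id (0 : ℝ)).mul_const x).neg.exp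
  refine (hexp.fun_mul (hasDerivAt_sum_mul_pow_zero (range (M + 1)) _ (1 - x))).congr_deriv ?_
  simp only [zero_mul, zero_pow_eq, mul_ite, mul_one, mul_zero, sum_ite_eq', mem_range]
  rcases M.eq_zero_or_pos with rfl | hM
  · simp [Nat.factorial_ne_zero]
  · simp [hM, Nat.factorial_ne_zero, factorial_pred_div_factorial (Nat.one_le_iff_ne_zero.mp hr)]
    ring
end

section
/- (Monotonicity of the conditional likelihood ratio.) Let M ≥ 0 and r ≥ 1 be integers and let s ≥ 0 and c ≥ 0 be real numbers. Then the function h : [0,1] → ℝ defined by h(x) := e^{−s c x} · Σ_{k=0}^{M} C(M,k) · ((r−1)!/(r+k−1)!) · (s c (1−x))^k is nonincreasing (antitone) on [0,1]. -/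
open Finset

/-- Monotonicity of the conditional likelihood ratio: for `s ≥ 0`, `c ≥ 0`, the CMPID
statistic `h(x) = e^{−scx} Σ_{k=0}^{M} C(M,k) ((r−1)!/(r+k−1)!) (s c (1−x))^k` is
nonincreasing on `[0,1]`. -/
theorem stmt13 (M r : ℕ) (hr : 1 ≤ r) (s c : ℝ) (hs : 0 ≤ s) (hc : 0 ≤ c) :
    AntitoneOn (fun x : ℝ => Real.exp (-(s * c * x)) *
      ∑ k ∈ Finset.range (M + 1), (M.choose k : ℝ) *
        ((Nat.factorial (r - 1) : ℝ) / (Nat.factorial (r + k - 1))) *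
          (s * c * (1 - x)) ^ k)
      (Set.Icc 0 1) := by
  intro x hx y hy hxy
  simp only [Finset.mul_sum]
  apply Finset.sum_le_sum
  intro k _
  have ha : 0 ≤ s * c := mul_nonneg hs hc
  have hck : (0:ℝ) ≤ (M.choose k : ℝ) *
      ((Nat.factorial (r - 1) : ℝ) / (Nat.factorial (r + k - 1))) := by
    positivity
  have he : Real.exp (-(s * c * y)) ≤ Real.exp (-(s * c * x)) := by
    apply Real.exp_le_exp.mpr
    nlinarith
  have hp : (s * c * (1 - y)) ^ k ≤ (s * c * (1 - x)) ^ k := by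
    apply pow_le_pow_left₀
    · have := hy.2
      nlinarith
    · nlinarith
  calc Real.exp (-(s * c * y)) * ((M.choose k : ℝ) *
        ((Nat.factorial (r - 1) : ℝ) / (Nat.factorial (r + k - 1))) *
          (s * c * (1 - y)) ^ k)
      ≤ Real.exp (-(s * c * x)) * ((M.choose k : ℝ) *
        ((Nat.factorial (r - 1) : ℝ) / (Nat.factorial (r + k - 1))) *
          (s * c * (1 - x)) ^ k) := by
        apply mul_le_mul he ?_ ?_ (Real.exp_nonneg _)
        · exact mul_le_mul_of_nonneg_left hp hck
        · exact mul_nonneg hck (pow_nonneg (by nlinarith [hy.2] : (0:ℝ) ≤ s * c * (1 - y)) k)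
end
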